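/- arXiv:math/9703213 — 2 statements merged into one kernel-verified Lean document; each statement's English description precedes it below -/
import Mathlib

section
/- Let L⁺ = {q₀ + t v₀ : t ≥ 0} and L⁻ = {q₀ + t v₀ : t ≤ 0} be two opposite rays in ℝⁿ. Then the distance from L⁺ to the integer lattice ℤⁿ equals the distance from L⁻ to ℤⁿ. -/
/-- The integer lattice ℤⁿ viewed inside Euclidean space ℝⁿ. -/
def intLattice (n : ℕ) : Set (EuclideanSpace ℝ (Fin n)) :=
  {p | ∀ i, ∃ m : ℤ, p i = (m : ℝ)}

namespace Stmt0Aux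

variable {n : ℕ}

lemma zero_mem : (0 : EuclideanSpace ℝ (Fin n)) ∈ intLattice n :=
  fun _ => ⟨0, by simp⟩

lemma add_mem {a b : EuclideanSpace ℝ (Fin n)} (ha : a ∈ intLattice n)
    (hb : b ∈ intLattice n) : a + b ∈ intLattice n := by
  intro i
  obtain ⟨m, hm⟩ := ha i
  obtain ⟨m', hm'⟩ := hb i
  exact ⟨m + m', by simp [PiLp.add_apply, hm, hm']⟩

lemma sub_mem {a b : EuclideanSpace ℝ (Fin n)} (ha : a ∈ intLattice n)
    (hb : b ∈ intLattice n) : a - b ∈ intLattice n := by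
  intro i
  obtain ⟨m, hm⟩ := ha i
  obtain ⟨m', hm'⟩ := hb i
  exact ⟨m - m', by simp [PiLp.sub_apply, hm, hm']⟩

lemma nsmul_mem {a : EuclideanSpace ℝ (Fin n)} (ha : a ∈ intLattice n) (m : ℕ) :
    (m : ℝ) • a ∈ intLattice n := by
  intro i
  obtain ⟨k, hk⟩ := ha i
  exact ⟨(m : ℤ) * k, by simp [PiLp.smul_apply, hk]⟩

/-- componentwise fractional part -/
noncomputable def fracPart (x : EuclideanSpace ℝ (Fin n)) : EuclideanSpace ℝ (Fin n) :=
  WithLp.toLp 2 (fun i => Int.fract (x i))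

lemma self_sub_fracPart_mem (x : EuclideanSpace ℝ (Fin n)) :
    x - fracPart x ∈ intLattice n := by
  intro i
  refine ⟨⌊x i⌋, ?_⟩
  simp only [PiLp.sub_apply, fracPart, PiLp.toLp_apply]
  rw [Int.self_sub_fract]

lemma norm_fracPart_le (x : EuclideanSpace ℝ (Fin n)) :
    ‖fracPart x‖ ≤ Real.sqrt n := by
  rw [EuclideanSpace.norm_eq]
  apply Real.sqrt_le_sqrt
  calc ∑ i, ‖fracPart x i‖ ^ 2 ≤ ∑ _i : Fin n, (1 : ℝ) := by
        apply Finset.sum_le_sum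
        intro i _
        have h0 := Int.fract_nonneg (x i)
        have h1 := Int.fract_lt_one (x i)
        have : ‖fracPart x i‖ ≤ 1 := by
          simp only [fracPart, PiLp.toLp_apply, Real.norm_eq_abs, abs_of_nonneg h0]
          linarith
        calc ‖fracPart x i‖ ^ 2 ≤ 1 ^ 2 := by
              apply pow_le_pow_left₀ (norm_nonneg _) this
          _ = 1 := one_pow 2
    _ = (n : ℝ) := by simp

/-- Pigeonhole: some positive integer multiple of `v` is δ-close to the lattice. -/
lemma near_lattice (v : EuclideanSpace ℝ (Fin n)) {δ : ℝ} (hδ : 0 < δ) :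
    ∃ k : ℕ, 1 ≤ k ∧ ∃ z ∈ intLattice n, ‖(k : ℝ) • v - z‖ < δ := by
  set u : ℕ → EuclideanSpace ℝ (Fin n) := fun k => fracPart ((k : ℝ) • v) with hu
  have humem : ∀ k, u k ∈ Metric.closedBall (0 : EuclideanSpace ℝ (Fin n)) (Real.sqrt n) := by
    intro k
    rw [Metric.mem_closedBall, dist_zero_right]
    exact norm_fracPart_le _
  obtain ⟨x, -, φ, hφ, hlim⟩ :=
    (isCompact_closedBall (0 : EuclideanSpace ℝ (Fin n)) (Real.sqrt n)).tendsto_subseq humem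
  obtain ⟨N, hN⟩ := (Metric.tendsto_atTop.mp hlim) (δ / 2) (half_pos hδ)
  set k₁ := φ N
  set k₂ := φ (N + 1)
  have hk12 : k₁ < k₂ := hφ (lt_add_one N)
  have hd : dist (u k₂) (u k₁) < δ := by
    calc dist (u k₂) (u k₁) ≤ dist (u k₂) x + dist (u k₁) x := dist_triangle_right _ _ _
      _ < δ / 2 + δ / 2 := add_lt_add (hN (N + 1) (by omega)) (hN N le_rfl)
      _ = δ := add_halves δ
  refine ⟨k₂ - k₁, by omega,
    ((k₂ : ℝ) • v - u k₂) - ((k₁ : ℝ) • v - u k₁),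
    sub_mem (self_sub_fracPart_mem _) (self_sub_fracPart_mem _), ?_⟩
  have hcast : ((k₂ - k₁ : ℕ) : ℝ) = (k₂ : ℝ) - (k₁ : ℝ) := by
    rw [Nat.cast_sub hk12.le]
  have hrw : ((k₂ - k₁ : ℕ) : ℝ) • v - (((k₂ : ℝ) • v - u k₂) - ((k₁ : ℝ) • v - u k₁))
      = u k₂ - u k₁ := by
    rw [hcast, sub_smul]; abel
  rw [hrw, ← dist_eq_norm]
  exact hd

/-- Recurrence: arbitrarily large times τ with τ•v ε-close to the lattice. -/
lemma recurrence (v : EuclideanSpace ℝ (Fin n)) {ε : ℝ} (hε : 0 < ε) (M : ℝ) :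
    ∃ τ : ℝ, M ≤ τ ∧ ∃ z ∈ intLattice n, ‖τ • v - z‖ < ε := by
  obtain ⟨m, hm1, hmM⟩ : ∃ m : ℕ, 1 ≤ m ∧ M ≤ (m : ℝ) :=
    ⟨max 1 ⌈M⌉₊, le_max_left _ _, le_trans (Nat.le_ceil M)
      (by exact_mod_cast Nat.le_max_right 1 ⌈M⌉₊)⟩
  have hmpos : (0 : ℝ) < m := by exact_mod_cast hm1
  obtain ⟨k, hk1, z, hz, hnorm⟩ := near_lattice v (div_pos hε hmpos)
  refine ⟨(m : ℝ) * (k : ℝ), ?_, (m : ℝ) • z, nsmul_mem hz m, ?_⟩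
  · calc M ≤ (m : ℝ) := hmM
      _ = (m : ℝ) * 1 := (mul_one _).symm
      _ ≤ (m : ℝ) * (k : ℝ) := by
          apply mul_le_mul_of_nonneg_left _ hmpos.le
          exact_mod_cast hk1
  · have : ((m : ℝ) * (k : ℝ)) • v - (m : ℝ) • z = (m : ℝ) • ((k : ℝ) • v - z) := by
      rw [smul_sub, mul_smul]
    rw [this, norm_smul, Real.norm_eq_abs, abs_of_pos hmpos]
    calc (m : ℝ) * ‖(k : ℝ) • v - z‖ < (m : ℝ) * (ε / m) := by
          exact mul_lt_mul_of_pos_left hnorm hmpos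
      _ = ε := by field_simp

/-- The set of distances from points of the forward ray from q₀ in direction v
to lattice points. -/
def raySet (q₀ v : EuclideanSpace ℝ (Fin n)) : Set ℝ :=
  {d : ℝ | ∃ p ∈ {q : EuclideanSpace ℝ (Fin n) | ∃ t : ℝ, 0 ≤ t ∧ q = q₀ + t • v},
      ∃ z ∈ intLattice n, d = dist p z}

lemma raySet_nonempty (q₀ v : EuclideanSpace ℝ (Fin n)) : (raySet q₀ v).Nonempty :=
  ⟨dist q₀ 0, q₀, ⟨0, le_rfl, by simp⟩, 0, zero_mem, rfl⟩

lemma raySet_bddBelow (q₀ v : EuclideanSpace ℝ (Fin n)) : BddBelow (raySet q₀ v) := by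
  refine ⟨0, ?_⟩
  rintro d ⟨p, _, z, _, rfl⟩
  exact dist_nonneg

lemma inf_le_inf_neg (q₀ v : EuclideanSpace ℝ (Fin n)) :
    sInf (raySet q₀ v) ≤ sInf (raySet q₀ (-v)) := by
  apply le_csInf (raySet_nonempty q₀ (-v))
  rintro d ⟨p, ⟨s, hs, rfl⟩, w, hw, rfl⟩
  apply le_of_forall_pos_le_add
  intro ε hε
  obtain ⟨τ, hτ, z, hz, hnorm⟩ := recurrence v hε s
  have hmem : dist (q₀ + (τ - s) • v) (w + z) ∈ raySet q₀ v :=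
    ⟨q₀ + (τ - s) • v, ⟨τ - s, by linarith, rfl⟩, w + z, add_mem hw hz, rfl⟩
  calc sInf (raySet q₀ v) ≤ dist (q₀ + (τ - s) • v) (w + z) :=
        csInf_le (raySet_bddBelow q₀ v) hmem
    _ ≤ dist (q₀ + s • (-v)) w + ε := by
        rw [dist_eq_norm, dist_eq_norm]
        have hsplit : q₀ + (τ - s) • v - (w + z)
            = (q₀ + s • (-v) - w) + (τ • v - z) := by
          rw [sub_smul, smul_neg]; abel
        rw [hsplit]
        calc ‖(q₀ + s • (-v) - w) + (τ • v - z)‖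
            ≤ ‖q₀ + s • (-v) - w‖ + ‖τ • v - z‖ := norm_add_le _ _
          _ ≤ ‖q₀ + s • (-v) - w‖ + ε := by linarith

end Stmt0Aux

/-- Sublemma 4.2: the two opposite rays L⁺ = {q₀ + t v₀ : t ≥ 0} and
L⁻ = {q₀ + t v₀ : t ≤ 0} have the same distance to the integer lattice ℤⁿ. -/
theorem stmt_0 (n : ℕ) (q₀ v₀ : EuclideanSpace ℝ (Fin n)) (hv : v₀ ≠ 0) :
    sInf {d : ℝ | ∃ p ∈ {q : EuclideanSpace ℝ (Fin n) | ∃ t : ℝ, 0 ≤ t ∧ q = q₀ + t • v₀},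
        ∃ z ∈ intLattice n, d = dist p z}
      = sInf {d : ℝ | ∃ p ∈ {q : EuclideanSpace ℝ (Fin n) | ∃ t : ℝ, t ≤ 0 ∧ q = q₀ + t • v₀},
        ∃ z ∈ intLattice n, d = dist p z} := by
  have hsets : {q : EuclideanSpace ℝ (Fin n) | ∃ t : ℝ, t ≤ 0 ∧ q = q₀ + t • v₀}
      = {q : EuclideanSpace ℝ (Fin n) | ∃ t : ℝ, 0 ≤ t ∧ q = q₀ + t • (-v₀)} := by
    ext q
    constructor
    · rintro ⟨t, ht, rfl⟩
      exact ⟨-t, by linarith, by rw [smul_neg, neg_smul, neg_neg]⟩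
    · rintro ⟨t, ht, rfl⟩
      exact ⟨-t, by linarith, by rw [smul_neg, neg_smul]⟩
  have h1 : {d : ℝ | ∃ p ∈ {q : EuclideanSpace ℝ (Fin n) | ∃ t : ℝ, 0 ≤ t ∧ q = q₀ + t • v₀},
      ∃ z ∈ intLattice n, d = dist p z} = Stmt0Aux.raySet q₀ v₀ := rfl
  have h2 : {d : ℝ | ∃ p ∈ {q : EuclideanSpace ℝ (Fin n) | ∃ t : ℝ, t ≤ 0 ∧ q = q₀ + t • v₀},
      ∃ z ∈ intLattice n, d = dist p z} = Stmt0Aux.raySet q₀ (-v₀) := by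
    rw [Stmt0Aux.raySet, hsets]
  rw [h1, h2]
  refine le_antisymm (Stmt0Aux.inf_le_inf_neg q₀ v₀) ?_
  have := Stmt0Aux.inf_le_inf_neg q₀ (-v₀)
  rwa [neg_neg] at this
end

section
/- Let π : ℝⁿ → ℝⁿ/ℤⁿ be the canonical projection and let L⁺ = {q₀ + t v₀ : t ≥ 0} be a ray with v₀ ≠ 0. Then the closure of π(L⁺) in the torus ℝⁿ/ℤⁿ equals the closure of π(L⁻) where L⁻ = {q₀ + t v₀ : t ≤ 0}, and this common closure is a coset x₀ + H of a closed subgroup H of ℝⁿ/ℤⁿ. -/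
/-- The integer lattice ℤⁿ as an additive subgroup of ℝⁿ. -/
def intSubgroup (n : ℕ) : AddSubgroup (Fin n → ℝ) :=
  AddSubgroup.pi Set.univ fun _ => AddSubgroup.zmultiples (1 : ℝ)

/-- The n-dimensional torus ℝⁿ/ℤⁿ. -/
abbrev Torus (n : ℕ) := (Fin n → ℝ) ⧸ intSubgroup n

open Set Pointwise

theorem Torus.mk_fract {n : ℕ} (q : Fin n → ℝ) :
    ((fun i => Int.fract (q i) : Fin n → ℝ) : Torus n) = q := by
  refine QuotientAddGroup.eq_iff_sub_mem.2 fun i _ => ⟨-⌊q i⌋, ?_⟩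
  simp

instance Torus.compactSpace (n : ℕ) : CompactSpace (Torus n) := by
  have hcube : (QuotientAddGroup.mk : (Fin n → ℝ) → Torus n) '' univ.pi (fun _ => Icc 0 1)
      = univ := by
    refine eq_univ_of_forall fun x => ?_
    obtain ⟨q, rfl⟩ := QuotientAddGroup.mk_surjective x
    exact ⟨_, fun i _ => ⟨Int.fract_nonneg _, (Int.fract_lt_one _).le⟩, Torus.mk_fract q⟩
  exact ⟨hcube ▸ (isCompact_univ_pi fun _ => isCompact_Icc).image continuous_quot_mk⟩

section CompactGroup

variable {A G : Type*} [AddGroup A] [AddGroup G] [TopologicalSpace G] [IsTopologicalAddGroup G]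
  [CompactSpace G]

theorem closure_image_eq_closure_range_of_closure_eq_top {S : AddSubmonoid A}
    (hS : AddSubgroup.closure (S : Set A) = ⊤) (f : A →+ G) :
    closure (f '' S) = closure (range f) := by
  rw [← AddSubmonoid.coe_map, ← AddSubmonoid.closure_eq (S.map f),
    closure_addSubmonoidClosure_eq_closure_addSubgroupClosure, AddSubmonoid.coe_map,
    ← AddMonoidHom.map_closure, hS, ← AddMonoidHom.range_eq_map, AddMonoidHom.coe_range]

theorem AddSubgroup.closure_Ici_zero {α : Type*} [AddCommGroup α] [LinearOrder α]
    [IsOrderedAddMonoid α] : AddSubgroup.closure (Ici (0 : α)) = ⊤ := by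
  refine (AddSubgroup.eq_top_iff' _).2 fun a => ?_
  rcases le_total 0 a with ha | ha
  · exact AddSubgroup.subset_closure ha
  · simpa using neg_mem (AddSubgroup.subset_closure (k := Ici (0 : α)) (neg_nonneg.2 ha))

variable {α : Type*} [AddCommGroup α] [LinearOrder α] [IsOrderedAddMonoid α]

theorem closure_image_Ici_zero_eq_closure_range (f : α →+ G) :
    closure (f '' Ici 0) = closure (range f) := by
  rw [← AddSubmonoid.coe_nonneg]
  exact closure_image_eq_closure_range_of_closure_eq_top
    (by rw [AddSubmonoid.coe_nonneg, AddSubgroup.closure_Ici_zero]) f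

theorem closure_image_Iic_zero_eq_closure_range (f : α →+ G) :
    closure (f '' Iic 0) = closure (range f) := by
  have := closure_image_Ici_zero_eq_closure_range (f.comp (-AddMonoidHom.id α))
  have hneg : Function.Surjective (-AddMonoidHom.id α) := neg_surjective
  have himage : (-AddMonoidHom.id α) '' Ici 0 = Iic 0 := by
    change Neg.neg '' Ici (0 : α) = Iic 0
    simp
  rwa [AddMonoidHom.coe_comp, image_comp, himage, hneg.range_comp] at this

end CompactGroup

theorem AddMonoidHom.image_affineLine {E H : Type*} [AddCommGroup E] [Module ℝ E] [AddGroup H]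
    (π : E →+ H) (q₀ v₀ : E) (s : Set ℝ) :
    π '' {q | ∃ t ∈ s, q = q₀ + t • v₀} = π q₀ +ᵥ (π.comp ((smulAddHom ℝ E).flip v₀)) '' s := by
  rw [← image_vadd, image_image]
  ext x
  simp [eq_comm]

theorem stmt_1_general (n : ℕ) (q₀ v₀ : Fin n → ℝ) :
    closure ((QuotientAddGroup.mk : (Fin n → ℝ) → Torus n) ''
        {q | ∃ t : ℝ, 0 ≤ t ∧ q = q₀ + t • v₀})
      = closure ((QuotientAddGroup.mk : (Fin n → ℝ) → Torus n) ''
        {q | ∃ t : ℝ, t ≤ 0 ∧ q = q₀ + t • v₀}) ∧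
    ∃ (x₀ : Torus n) (H : AddSubgroup (Torus n)), IsClosed (H : Set (Torus n)) ∧
      closure ((QuotientAddGroup.mk : (Fin n → ℝ) → Torus n) ''
        {q | ∃ t : ℝ, 0 ≤ t ∧ q = q₀ + t • v₀})
        = (fun h => x₀ + h) '' (H : Set (Torus n)) := by
  set f : ℝ →+ Torus n := (QuotientAddGroup.mk' (intSubgroup n)).comp ((smulAddHom ℝ _).flip v₀)
  have hforward : (QuotientAddGroup.mk : (Fin n → ℝ) → Torus n) ''
      {q | ∃ t : ℝ, 0 ≤ t ∧ q = q₀ + t • v₀} = (q₀ : Torus n) +ᵥ f '' Ici 0 :=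
    (QuotientAddGroup.mk' (intSubgroup n)).image_affineLine q₀ v₀ (Ici 0)
  have hbackward : (QuotientAddGroup.mk : (Fin n → ℝ) → Torus n) ''
      {q | ∃ t : ℝ, t ≤ 0 ∧ q = q₀ + t • v₀} = (q₀ : Torus n) +ᵥ f '' Iic 0 :=
    (QuotientAddGroup.mk' (intSubgroup n)).image_affineLine q₀ v₀ (Iic 0)
  refine ⟨?_, q₀, f.range.topologicalClosure, f.range.isClosed_topologicalClosure, ?_⟩
  · rw [hforward, hbackward, closure_vadd, closure_vadd, closure_image_Ici_zero_eq_closure_range,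
      closure_image_Iic_zero_eq_closure_range]
  · rw [hforward, closure_vadd, closure_image_Ici_zero_eq_closure_range,
      AddSubgroup.topologicalClosure_coe, AddMonoidHom.coe_range]
    exact image_vadd.symm

/-- The closures of the projections of the two opposite rays into the torus ℝⁿ/ℤⁿ
coincide, and the common closure is a coset x₀ + H of a closed subgroup H. -/
theorem stmt_1 (n : ℕ) (q₀ v₀ : Fin n → ℝ) (hv : v₀ ≠ 0) :
    closure ((QuotientAddGroup.mk : (Fin n → ℝ) → Torus n) ''
        {q | ∃ t : ℝ, 0 ≤ t ∧ q = q₀ + t • v₀})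
      = closure ((QuotientAddGroup.mk : (Fin n → ℝ) → Torus n) ''
        {q | ∃ t : ℝ, t ≤ 0 ∧ q = q₀ + t • v₀}) ∧
    ∃ (x₀ : Torus n) (H : AddSubgroup (Torus n)), IsClosed (H : Set (Torus n)) ∧
      closure ((QuotientAddGroup.mk : (Fin n → ℝ) → Torus n) ''
        {q | ∃ t : ℝ, 0 ≤ t ∧ q = q₀ + t • v₀})
        = (fun h => x₀ + h) '' (H : Set (Torus n)) :=
  stmt_1_general n q₀ v₀
end
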